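/- arXiv:1504.05798 — 2 statements merged into one kernel-verified Lean document; each statement's English description precedes it below -/
import Mathlib

section
/- For every real q with 0 < q < 1 and every real x > -1/q, the partial derivative ∂θ/∂x(q,x) is strictly positive. -/
/-!
Termwise differentiation gives `∂θ/∂x (q,x) = q H(qx)` with
`H(y) = weightedTheta q y = ∑ (j+1) q^(j(j+1)/2) y^j`, so it suffices to show `H > 0` on
`[-1, ∞)`; only `y ∈ [-1,0]` needs an argument. The functional equation `θ(x) = 1 + qx θ(qx)`
gives `H(y) = (2θ(y) - 1) + q³y² H(q²y)`, so `H > 0` there once `2θ - 1 > 0` on `[-1,0]`.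
The function `g = 2θ - 1` satisfies `g(z) = 1 + qz + qz g(qz)`; on `[-1,0]` the right-hand side
is order-reversing in `g` and contracts by the factor `q`, so `g` stays between two explicit
rational functions `thetaLower ≤ thetaUpper`, and `thetaLower > 0`. Both contraction arguments
are instances of one principle: a bounded-below `f` with `f ≥ c · (f ∘ φ)`, `0 ≤ c ≤ r < 1`,
is nonnegative, since iterating gives `f ≥ -B rᵐ`.
-/

/-- The partial theta function `θ(q,x) = ∑_{j=0}^∞ q^(j(j+1)/2) x^j`. -/
noncomputable def theta (q x : ℝ) : ℝ := ∑' j : ℕ, q ^ (j * (j + 1) / 2) * x ^ j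

open Filter Set Topology

theorem nonneg_on_of_mul_comp_le {α : Type*} {s : Set α} {f c : α → ℝ} {φ : α → α}
    {r : ℝ} (hr : r < 1) (hφ : MapsTo φ s s) (hc : ∀ y ∈ s, c y ∈ Icc 0 r)
    (hf : BddBelow (f '' s))
    (hrec : ∀ y ∈ s, c y * f (φ y) ≤ f y) : ∀ y ∈ s, 0 ≤ f y := by
  obtain ⟨b, hb⟩ := hf
  set B := max (-b) 0
  have hgeom : ∀ m : ℕ, ∀ y ∈ s, -B * r ^ m ≤ f y := by
    intro m
    induction m with
    | zero =>
      intro y hy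
      have hby := hb (mem_image_of_mem f hy)
      simp only [pow_zero, mul_one]
      linarith [le_max_left (-b) 0]
    | succ m ih =>
      intro y hy
      obtain ⟨hc₀, hcr⟩ := hc y hy
      have hBr : 0 ≤ B * r ^ m := mul_nonneg (le_max_right _ _) (pow_nonneg (hc₀.trans hcr) m)
      calc -B * r ^ (m + 1) = r * -(B * r ^ m) := by ring
        _ ≤ c y * -(B * r ^ m) := mul_le_mul_of_nonpos_right hcr (neg_nonpos.2 hBr)
        _ ≤ c y * f (φ y) := mul_le_mul_of_nonneg_left (by linarith [ih _ (hφ hy)]) hc₀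
        _ ≤ f y := hrec y hy
  intro y hy
  have hr₀ : 0 ≤ r := (hc y hy).1.trans (hc y hy).2
  have hlim : Tendsto (fun m : ℕ => -B * r ^ m) atTop (𝓝 0) := by
    simpa using (tendsto_pow_atTop_nhds_zero_of_lt_one hr₀ hr).const_mul (-B)
  exact le_of_tendsto' hlim fun m => hgeom m y hy

theorem abs_tsum_mul_pow_le {c : ℕ → ℝ} (hc : Summable c) (hc₀ : ∀ j, 0 ≤ c j) {z : ℝ}
    (hz : |z| ≤ 1) : |∑' j, c j * z ^ j| ≤ ∑' j, c j :=
  tsum_of_norm_bounded (f := fun j => c j * z ^ j) hc.hasSum fun j => by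
    rw [norm_mul, norm_pow, Real.norm_eq_abs, Real.norm_eq_abs, abs_of_nonneg (hc₀ j)]
    exact mul_le_of_le_one_right (hc₀ j) (pow_le_one₀ (abs_nonneg z) hz)

theorem pow_triangle_succ (q : ℝ) (j : ℕ) :
    q ^ ((j + 1) * (j + 1 + 1) / 2) = q ^ (j * (j + 1) / 2) * q ^ (j + 1) := by
  rw [← pow_add]
  congr 1
  rw [show (j + 1) * (j + 1 + 1) = j * (j + 1) + (j + 1) * 2 by ring,
    Nat.add_mul_div_right _ _ two_pos]

theorem summable_succ_mul_pow_triangle_mul_pow {q : ℝ} (hq : |q| < 1) (r : ℝ) :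
    Summable fun j : ℕ => ((j : ℝ) + 1) * q ^ (j * (j + 1) / 2) * r ^ j := by
  have hlim : Tendsto (fun n : ℕ => |q| ^ (n + 1) * |r|) atTop (𝓝 0) := by
    simpa using ((tendsto_pow_atTop_nhds_zero_of_lt_one (abs_nonneg q) hq).comp
      (tendsto_add_atTop_nat 1)).mul_const |r|
  refine summable_of_ratio_norm_eventually_le (r := 1 / 2) (by norm_num) ?_
  filter_upwards [hlim.eventually_le_const (by norm_num : (0 : ℝ) < 1 / 4)] with n hn
  have hA : 0 ≤ |q| ^ (n * (n + 1) / 2) * |r| ^ n := by positivity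
  have hn₀ : (0 : ℝ) ≤ n := n.cast_nonneg
  simp only [norm_mul, norm_pow, Real.norm_eq_abs, Nat.cast_succ, pow_triangle_succ]
  rw [abs_of_nonneg (by positivity : (0 : ℝ) ≤ n + 1 + 1),
    abs_of_nonneg (by positivity : (0 : ℝ) ≤ n + 1)]
  calc (n + 1 + 1 : ℝ) * (|q| ^ (n * (n + 1) / 2) * |q| ^ (n + 1)) * |r| ^ (n + 1)
      = (n + 1 + 1) * (|q| ^ (n + 1) * |r|) * (|q| ^ (n * (n + 1) / 2) * |r| ^ n) := by ring
    _ ≤ (n + 1 + 1) * (1 / 4) * (|q| ^ (n * (n + 1) / 2) * |r| ^ n) := by gcongr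
    _ ≤ 1 / 2 * ((n + 1) * |q| ^ (n * (n + 1) / 2) * |r| ^ n) := by nlinarith

theorem summable_pow_triangle_mul_pow {q : ℝ} (hq : |q| < 1) (x : ℝ) :
    Summable fun j : ℕ => q ^ (j * (j + 1) / 2) * x ^ j :=
  (summable_succ_mul_pow_triangle_mul_pow (q := |q|) (by rwa [abs_abs]) |x|).of_norm_bounded
    fun j => by
      rw [norm_mul, norm_pow, norm_pow, Real.norm_eq_abs, Real.norm_eq_abs, mul_assoc]
      exact le_mul_of_one_le_left (by positivity) (by linarith [j.cast_nonneg (α := ℝ)])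

theorem theta_eq_one_add {q : ℝ} (hq : |q| < 1) (x : ℝ) :
    theta q x = 1 + q * x * theta q (q * x) := by
  rw [theta, (summable_pow_triangle_mul_pow hq x).tsum_eq_zero_add, theta, ← tsum_mul_left]
  simp only [pow_triangle_succ]
  norm_num
  congr 1
  funext j
  ring

noncomputable def weightedTheta (q y : ℝ) : ℝ :=
  ∑' j : ℕ, ((j : ℝ) + 1) * q ^ (j * (j + 1) / 2) * y ^ j

theorem weightedTheta_eq_theta_add {q : ℝ} (hq : |q| < 1) (y : ℝ) :
    weightedTheta q y = theta q y + q * y * weightedTheta q (q * y) := by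
  have hsplit : ∀ j : ℕ,
      ((↑(j + 1) : ℝ) + 1) * q ^ ((j + 1) * (j + 1 + 1) / 2) * y ^ (j + 1) =
        q * y * (((j : ℝ) + 1) * q ^ (j * (j + 1) / 2) * (q * y) ^ j +
        q ^ (j * (j + 1) / 2) * (q * y) ^ j) := by
    intro j
    push_cast
    rw [pow_triangle_succ]
    ring
  rw [weightedTheta, (summable_succ_mul_pow_triangle_mul_pow hq y).tsum_eq_zero_add]
  simp only [hsplit]
  rw [tsum_mul_left, Summable.tsum_add (summable_succ_mul_pow_triangle_mul_pow hq _)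
    (summable_pow_triangle_mul_pow hq _), theta_eq_one_add hq y, weightedTheta, theta]
  norm_num
  ring

theorem weightedTheta_eq_two_mul_theta_sub_one_add {q : ℝ} (hq : |q| < 1) (y : ℝ) :
    weightedTheta q y = (2 * theta q y - 1) + q ^ 3 * y ^ 2 * weightedTheta q (q ^ 2 * y) := by
  have h₁ := weightedTheta_eq_theta_add hq y
  have h₂ := weightedTheta_eq_theta_add hq (q * y)
  rw [show q * (q * y) = q ^ 2 * y by ring] at h₂
  linear_combination h₁ + q * y * h₂ - theta_eq_one_add hq y

theorem hasDerivAt_theta {q : ℝ} (hq : |q| < 1) (x : ℝ) :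
    HasDerivAt (theta q) (q * weightedTheta q (q * x)) x := by
  set R := |x| + 1
  have hR : 1 ≤ R := le_add_of_nonneg_left (abs_nonneg x)
  have hxR : x ∈ Ioo (-R) R := abs_lt.1 (lt_add_one _)
  have hbound : ∀ j : ℕ, ∀ y ∈ Ioo (-R) R,
      ‖(j : ℝ) * q ^ (j * (j + 1) / 2) * y ^ (j - 1)‖ ≤
        ((j : ℝ) + 1) * |q| ^ (j * (j + 1) / 2) * R ^ j := by
    intro j y hy
    rw [norm_mul, norm_mul, norm_pow, norm_pow, Real.norm_eq_abs, Real.norm_eq_abs,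
      Real.norm_eq_abs, Nat.abs_cast]
    have hyR : |y| ^ (j - 1) ≤ R ^ j :=
      (pow_le_pow_left₀ (abs_nonneg y) (abs_lt.2 hy).le _).trans
        (pow_le_pow_right₀ hR (Nat.sub_le j 1))
    gcongr
    linarith
  have hderiv : ∀ j : ℕ, ∀ y ∈ Ioo (-R) R,
      HasDerivAt (fun z => q ^ (j * (j + 1) / 2) * z ^ j)
        ((j : ℝ) * q ^ (j * (j + 1) / 2) * y ^ (j - 1)) y :=
    fun j y _ => ((hasDerivAt_pow j y).const_mul _).congr_deriv (by ring)
  have hu := summable_succ_mul_pow_triangle_mul_pow (q := |q|) (by rwa [abs_abs]) R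
  refine (hasDerivAt_tsum_of_isPreconnected hu isOpen_Ioo (convex_Ioo _ _).isPreconnected
    hderiv hbound hxR (summable_pow_triangle_mul_pow hq x) hxR).congr_deriv ?_
  rw [(hu.of_norm_bounded fun j => hbound j x hxR).tsum_eq_zero_add, weightedTheta,
    ← tsum_mul_left]
  simp only [pow_triangle_succ]
  norm_num
  congr 1
  funext j
  ring

theorem abs_theta_le {q : ℝ} (hq₀ : 0 ≤ q) (hq₁ : q < 1) {z : ℝ} (hz : |z| ≤ 1) :
    |theta q z| ≤ theta q 1 := by
  have hq : |q| < 1 := by rwa [abs_of_nonneg hq₀]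
  simpa [theta] using abs_tsum_mul_pow_le (by simpa using summable_pow_triangle_mul_pow hq 1)
    (fun j => pow_nonneg hq₀ (j * (j + 1) / 2)) hz

theorem abs_weightedTheta_le {q : ℝ} (hq₀ : 0 ≤ q) (hq₁ : q < 1) {z : ℝ}
    (hz : |z| ≤ 1) : |weightedTheta q z| ≤ weightedTheta q 1 := by
  have hq : |q| < 1 := by rwa [abs_of_nonneg hq₀]
  simpa [weightedTheta] using abs_tsum_mul_pow_le
    (by simpa using summable_succ_mul_pow_triangle_mul_pow hq 1) (fun j => by positivity) hz

theorem mapsTo_mul_Icc_neg_one_zero {a : ℝ} (ha₀ : 0 ≤ a) (ha₁ : a ≤ 1) :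
    MapsTo (a * ·) (Icc (-1) 0) (Icc (-1) 0) := fun z hz =>
  ⟨by nlinarith [hz.1, hz.2], mul_nonpos_of_nonneg_of_nonpos ha₀ hz.2⟩

/-- `thetaUpper q` solves `f z = 1 + q z + q z f z`, the functional equation of `2 θ(q,·) - 1`
with its argument frozen; `thetaLower` is the result of feeding it once into the functional
equation. -/
noncomputable def thetaUpper (q z : ℝ) : ℝ := 1 + 2 * q * z / (1 - q * z)

noncomputable def thetaLower (q z : ℝ) : ℝ := 1 + 2 * q * z / (1 - q ^ 2 * z)

theorem thetaLower_eq {q z : ℝ} (hz : z ≤ 0) :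
    thetaLower q z = 1 + q * z + q * z * thetaUpper q (q * z) := by
  have h : 0 < 1 - q ^ 2 * z := by nlinarith [sq_nonneg q]
  rw [thetaLower, thetaUpper, show q * (q * z) = q ^ 2 * z by ring]
  field_simp
  ring

theorem thetaLower_le_one {q z : ℝ} (hq₀ : 0 ≤ q) (hz : z ≤ 0) : thetaLower q z ≤ 1 := by
  have : 2 * q * z / (1 - q ^ 2 * z) ≤ 0 :=
    div_nonpos_of_nonpos_of_nonneg (by nlinarith) (by nlinarith [sq_nonneg q])
  rw [thetaLower]
  linarith

theorem thetaUpper_nonneg {q z : ℝ} (hq₀ : 0 ≤ q) (hq₁ : q ≤ 1) (hz : z ∈ Icc (-1) 0) :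
    0 ≤ thetaUpper q z := by
  have h : 0 < 1 - q * z := by nlinarith [hz.2]
  have : -1 ≤ 2 * q * z / (1 - q * z) := by
    rw [le_div_iff₀ h]
    nlinarith [hz.1]
  rw [thetaUpper]
  linarith

theorem one_add_mul_thetaLower_le_thetaUpper {q z : ℝ} (hq₀ : 0 ≤ q) (hq₁ : q ≤ 1)
    (hz : z ∈ Icc (-1) 0) : 1 + q * z + q * z * thetaLower q (q * z) ≤ thetaUpper q z := by
  obtain ⟨hz₁, hz₂⟩ := hz
  have hqz : -1 ≤ q * z := by nlinarith
  have hq2z : -1 ≤ q ^ 2 * z := by nlinarith [pow_le_one₀ hq₀ hq₁ (n := 2)]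
  have h₁ : 0 < 1 - q * z := by nlinarith
  have h₃ : 0 < 1 - q ^ 3 * z := by nlinarith [pow_nonneg hq₀ 3]
  rw [thetaLower, thetaUpper, show q ^ 2 * (q * z) = q ^ 3 * z by ring, ← sub_nonneg]
  have key : 1 + 2 * q * z / (1 - q * z) -
        (1 + q * z + q * z * (1 + 2 * q * (q * z) / (1 - q ^ 3 * z))) =
      2 * (q * z) ^ 2 * (1 - q) * (1 + q ^ 2 * z) / ((1 - q * z) * (1 - q ^ 3 * z)) := by
    field_simp
    ring
  rw [key]
  have : 0 ≤ 2 * (q * z) ^ 2 * (1 - q) := mul_nonneg (by positivity) (by linarith)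
  exact div_nonneg (mul_nonneg this (by linarith)) (by positivity)

theorem thetaLower_pos {q z : ℝ} (hq₀ : 0 ≤ q) (hq₁ : q < 1) (hz : z ∈ Icc (-1) 0) :
    0 < thetaLower q z := by
  obtain ⟨hz₁, hz₂⟩ := hz
  have h : 0 < 1 - q ^ 2 * z := by nlinarith [sq_nonneg q]
  have : -1 < 2 * q * z / (1 - q ^ 2 * z) := by
    rw [lt_div_iff₀ h]
    have hq' : 0 ≤ q * (2 - q) * (z + 1) :=
      mul_nonneg (mul_nonneg hq₀ (by linarith)) (by linarith)
    nlinarith [sq_pos_of_pos (by linarith : 0 < 1 - q)]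
  rw [thetaLower]
  linarith

theorem thetaLower_le_two_mul_theta_sub_one {q : ℝ} (hq₀ : 0 < q) (hq₁ : q < 1) {z : ℝ}
    (hz : z ∈ Icc (-1) 0) : thetaLower q z ≤ 2 * theta q z - 1 := by
  have hq : |q| < 1 := abs_lt.2 ⟨by linarith, hq₁⟩
  set g : ℝ → ℝ := fun z => 2 * theta q z - 1 with hg
  have hg_eq : ∀ z, g z = 1 + q * z + q * z * g (q * z) := fun z => by
    simp only [hg]
    rw [theta_eq_one_add hq z]
    ring
  set F : ℝ → ℝ := fun z => min (g z - thetaLower q z) (thetaUpper q z - g z)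
  have hc : ∀ z ∈ Icc (-1 : ℝ) 0, -(q * z) ∈ Icc 0 q := fun z hz =>
    ⟨by nlinarith [hz.2], by nlinarith [hz.1]⟩
  have hbdd : BddBelow (F '' Icc (-1) 0) := by
    refine ⟨-(2 * theta q 1 + 2), ?_⟩
    rintro _ ⟨z, hz, rfl⟩
    have hθ := abs_le.1 (abs_theta_le hq₀.le hq₁ (abs_le.2 ⟨hz.1, hz.2.trans zero_le_one⟩))
    have hL := thetaLower_le_one hq₀.le hz.2
    have hU := thetaUpper_nonneg hq₀.le hq₁.le hz
    exact le_min (by linarith) (by linarith)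
  have hrec : ∀ z ∈ Icc (-1 : ℝ) 0, -(q * z) * F (q * z) ≤ F z := by
    intro z hz
    have hc₀ := (hc z hz).1
    refine le_min ?_ ?_
    · calc -(q * z) * F (q * z) ≤ -(q * z) * (thetaUpper q (q * z) - g (q * z)) :=
            mul_le_mul_of_nonneg_left (min_le_right _ _) hc₀
        _ = g z - thetaLower q z := by rw [hg_eq z, thetaLower_eq hz.2]; ring
    · calc -(q * z) * F (q * z) ≤ -(q * z) * (g (q * z) - thetaLower q (q * z)) :=
            mul_le_mul_of_nonneg_left (min_le_left _ _) hc₀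
        _ = 1 + q * z + q * z * thetaLower q (q * z) - g z := by rw [hg_eq z]; ring
        _ ≤ thetaUpper q z - g z := by
            linarith [one_add_mul_thetaLower_le_thetaUpper hq₀.le hq₁.le hz]
  exact sub_nonneg.1 (le_min_iff.1 (nonneg_on_of_mul_comp_le hq₁
    (mapsTo_mul_Icc_neg_one_zero hq₀.le hq₁.le) hc hbdd hrec z hz)).1

theorem two_mul_theta_sub_one_pos {q z : ℝ} (hq₀ : 0 < q) (hq₁ : q < 1)
    (hz : z ∈ Icc (-1) 0) : 0 < 2 * theta q z - 1 :=
  (thetaLower_pos hq₀.le hq₁ hz).trans_le (thetaLower_le_two_mul_theta_sub_one hq₀ hq₁ hz)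

theorem weightedTheta_nonneg {q y : ℝ} (hq₀ : 0 < q) (hq₁ : q < 1) (hy : y ∈ Icc (-1) 0) :
    0 ≤ weightedTheta q y := by
  have hq : |q| < 1 := abs_lt.2 ⟨by linarith, hq₁⟩
  have hc : ∀ z ∈ Icc (-1 : ℝ) 0, q ^ 3 * z ^ 2 ∈ Icc 0 (q ^ 3) := fun z hz =>
    ⟨by positivity, mul_le_of_le_one_right (by positivity) (by nlinarith [hz.1, hz.2])⟩
  have hbdd : BddBelow (weightedTheta q '' Icc (-1) 0) := by
    refine ⟨-weightedTheta q 1, ?_⟩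
    rintro _ ⟨z, hz, rfl⟩
    exact neg_le_of_abs_le
      (abs_weightedTheta_le hq₀.le hq₁ (abs_le.2 ⟨hz.1, hz.2.trans zero_le_one⟩))
  have hrec : ∀ z ∈ Icc (-1 : ℝ) 0,
      q ^ 3 * z ^ 2 * weightedTheta q (q ^ 2 * z) ≤ weightedTheta q z := fun z hz => by
    linarith [weightedTheta_eq_two_mul_theta_sub_one_add hq z,
      two_mul_theta_sub_one_pos hq₀ hq₁ hz]
  exact nonneg_on_of_mul_comp_le (pow_lt_one₀ hq₀.le hq₁ three_ne_zero)
    (mapsTo_mul_Icc_neg_one_zero (sq_nonneg q) (pow_le_one₀ hq₀.le hq₁.le)) hc hbdd hrec y hy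

theorem weightedTheta_pos {q y : ℝ} (hq₀ : 0 < q) (hq₁ : q < 1) (hy : -1 ≤ y) :
    0 < weightedTheta q y := by
  have hq : |q| < 1 := abs_lt.2 ⟨by linarith, hq₁⟩
  rcases le_or_gt y 0 with hy₀ | hy₀
  · have hy' : q ^ 2 * y ∈ Icc (-1) 0 :=
      mapsTo_mul_Icc_neg_one_zero (sq_nonneg q) (pow_le_one₀ hq₀.le hq₁.le) ⟨hy, hy₀⟩
    rw [weightedTheta_eq_two_mul_theta_sub_one_add hq y]
    exact add_pos_of_pos_of_nonneg (two_mul_theta_sub_one_pos hq₀ hq₁ ⟨hy, hy₀⟩)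
      (mul_nonneg (by positivity) (weightedTheta_nonneg hq₀ hq₁ hy'))
  · exact (summable_succ_mul_pow_triangle_mul_pow hq y).tsum_pos (fun j => by positivity) 0
      (by norm_num)

theorem stmt_10 (q : ℝ) (hq₁ : 0 < q) (hq₂ : q < 1) (x : ℝ) (hx : -1 / q < x) :
    0 < deriv (theta q) x := by
  have hqx : -1 ≤ q * x := by
    rw [div_lt_iff₀ hq₁] at hx
    linarith
  rw [(hasDerivAt_theta (abs_lt.2 ⟨by linarith, hq₂⟩) x).deriv]
  exact mul_pos hq₁ (weightedTheta_pos hq₁ hq₂ hqx)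
end

section
/- For every real q with 0 < q < 1 and every real x > -q^{-1/2}, one has θ(q,x) > 1/2. -/
open Real Complex MeasureTheory ComplexConjugate

section PoissonKernel

variable {r : ℝ} (hr : |r| < 1)
include hr

lemma one_sub_abs_div_le_poissonKernel (θ : ℝ) :
    (1 - |r|) / (1 + |r|) ≤ poissonKernel 0 r (cexp (θ * I)) := by
  rw [poissonKernel_eq_re_herglotzRieszKernel, Function.comp_apply, herglotzRieszKernel_def]
  simpa using le_re_herglotzRieszKernel (R := 1) (c := 0) (z := cexp (θ * I)) (w := r)
    (by simp) (by simpa using hr)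

lemma poissonKernel_le_one_add_abs_div (θ : ℝ) :
    poissonKernel 0 r (cexp (θ * I)) ≤ (1 + |r|) / (1 - |r|) := by
  rw [poissonKernel_eq_re_herglotzRieszKernel, Function.comp_apply, herglotzRieszKernel_def]
  simpa using re_herglotzRieszKernel_le (R := 1) (c := 0) (z := cexp (θ * I)) (w := r)
    (by simp) (by simpa using hr)

lemma continuous_poissonKernel_cexp_mul_I :
    Continuous fun θ : ℝ ↦ poissonKernel 0 r (cexp (θ * I)) := by
  rw [poissonKernel_eq_re_herglotzRieszKernel]
  have h := continuousOn_herglotzRieszKernel_sphere (c := 0) (R := 1) (w := r)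
    (by simpa using hr)
  exact (continuous_re.comp_continuousOn h).comp_continuous (f := fun θ : ℝ ↦ cexp (θ * I))
    (by fun_prop) (by simp)

lemma hasSum_poissonKernel {z : ℂ} (hz : ‖z‖ = 1) :
    HasSum (fun j : ℤ ↦ (r : ℂ) ^ j.natAbs * z ^ j) (poissonKernel 0 r z) := by
  have hzz : z * conj z = 1 := by
    rw [mul_conj, normSq_eq_norm_sq, hz]; norm_num
  have hinv : z⁻¹ = conj z := inv_eq_of_mul_eq_one_right hzz
  have hrz : ‖(r : ℂ) * z‖ < 1 := by rwa [norm_mul, hz, mul_one, Complex.norm_real]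
  have hrz' : ‖(r : ℂ) * conj z‖ < 1 := by
    rwa [norm_mul, RCLike.norm_conj, hz, mul_one, Complex.norm_real]
  have hpos : HasSum (fun n : ℕ ↦ (r : ℂ) ^ (n : ℤ).natAbs * z ^ (n : ℤ)) (1 - r * z)⁻¹ := by
    refine (hasSum_geometric_of_norm_lt_one hrz).congr_fun fun n ↦ ?_
    rw [Int.natAbs_natCast, zpow_natCast, mul_pow]
  have hneg : HasSum (fun n : ℕ ↦ (r : ℂ) ^ (-(n + 1 : ℤ)).natAbs * z ^ (-(n + 1 : ℤ)))
      (r * conj z * (1 - r * conj z)⁻¹) := by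
    refine ((hasSum_geometric_of_norm_lt_one hrz').mul_left _).congr_fun fun n ↦ ?_
    rw [← pow_succ', show (-(n + 1 : ℤ)).natAbs = n + 1 by omega, zpow_neg, ← hinv, mul_pow,
      inv_pow]
    norm_cast
  convert HasSum.of_nat_of_neg_add_one (f := fun j : ℤ ↦ (r : ℂ) ^ j.natAbs * z ^ j)
    hpos hneg using 1
  have h₁ : 1 - (r : ℂ) * z ≠ 0 := sub_ne_zero.mpr fun h ↦ by simp [← h] at hrz
  have h₂ : 1 - (r : ℂ) * conj z ≠ 0 := sub_ne_zero.mpr fun h ↦ by simp [← h] at hrz'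
  have hden : (‖z - r‖ : ℂ) ^ 2 = (1 - r * z) * (1 - r * conj z) := by
    rw [← ofReal_pow, ← normSq_eq_norm_sq, ← mul_conj]
    simp only [map_sub, conj_ofReal]
    linear_combination (1 - (r : ℂ) ^ 2) * hzz
  rw [poissonKernel_def, sub_zero, sub_zero, hz, Complex.norm_real, Real.norm_eq_abs, sq_abs]
  push_cast
  rw [hden]
  field_simp
  linear_combination (r : ℂ) ^ 2 * hzz

end PoissonKernel

lemma integral_cexp_mul_I_mul_gaussian {b : ℝ} (hb : 0 < b) (t : ℝ) :
    ∫ x : ℝ, cexp (t * x * I) * rexp (-b * x ^ 2) =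
      (√(π / b) * rexp (-t ^ 2 / (4 * b)) : ℝ) := by
  have h := fourierIntegral_gaussian (b := b) (by simpa using hb) t
  simp_rw [mul_comm I (t : ℂ), mul_right_comm (t : ℂ) I] at h
  push_cast
  rw [h, Real.sqrt_eq_rpow, ofReal_cpow (div_pos pi_pos hb).le]
  push_cast
  ring_nf

lemma summable_abs_pow_natAbs {r : ℝ} (hr : |r| < 1) : Summable fun j : ℤ ↦ |r| ^ j.natAbs := by
  have h := summable_geometric_of_lt_one (abs_nonneg r) hr
  exact .of_nat_of_neg (by simpa using h) (by simpa using h)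

section GaussianAverage

variable {a r : ℝ} (ha : 0 < a) (hr : |r| < 1)
include ha hr

lemma hasSum_pow_natAbs_mul_exp_neg_mul_sq :
    HasSum (fun j : ℤ ↦ r ^ j.natAbs * rexp (-a * j ^ 2))
      ((∫ x : ℝ, poissonKernel 0 r (cexp (x * I)) * rexp (-(4 * a)⁻¹ * x ^ 2)) /
        √(4 * π * a)) := by
  -- `e^{-b x²}` is the Gaussian whose Fourier transform is a multiple of `e^{-a t²}`
  set b := (4 * a)⁻¹
  have hb : 0 < b := by positivity
  let F : ℤ → ℝ → ℂ := fun j x ↦ (r : ℂ) ^ j.natAbs * cexp (x * I) ^ j * rexp (-b * x ^ 2)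
  have hF_norm (j : ℤ) (x : ℝ) : ‖F j x‖ = |r| ^ j.natAbs * rexp (-b * x ^ 2) := by
    simp only [F, norm_mul, norm_pow, norm_zpow, Complex.norm_real, norm_exp_ofReal_mul_I,
      one_zpow, mul_one, Real.norm_eq_abs, abs_of_pos (Real.exp_pos _)]
  have hF_int (j : ℤ) : Integrable (F j) :=
    ((integrable_exp_neg_mul_sq hb).const_mul _).mono' (by fun_prop)
      (.of_forall fun x ↦ (hF_norm j x).le)
  have hF_sum : Summable fun j ↦ ∫ x, ‖F j x‖ := by
    simp_rw [hF_norm, integral_const_mul]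
    exact (summable_abs_pow_natAbs hr).mul_right _
  have hF_tsum (x : ℝ) : ∑' j, F j x =
      ((poissonKernel 0 r (cexp (x * I)) * rexp (-b * x ^ 2) : ℝ) : ℂ) := by
    rw [ofReal_mul]
    exact ((hasSum_poissonKernel hr (by simp)).mul_right _).tsum_eq
  have hF_integral (j : ℤ) :
      ∫ x, F j x = ((√(4 * π * a) * (r ^ j.natAbs * rexp (-a * j ^ 2)) : ℝ) : ℂ) := by
    have hF : F j = fun x : ℝ ↦
        (r : ℂ) ^ j.natAbs * (cexp ((j : ℝ) * x * I) * rexp (-b * x ^ 2)) := by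
      ext x
      rw [← mul_assoc, ofReal_intCast, mul_assoc (j : ℂ), Complex.exp_int_mul]
    rw [hF, integral_const_mul, integral_cexp_mul_I_mul_gaussian hb,
      show π / b = 4 * π * a by simp only [b]; field_simp,
      show -(j : ℝ) ^ 2 / (4 * b) = -a * j ^ 2 by simp only [b]; field_simp]
    push_cast
    ring
  have h := hasSum_integral_of_summable_integral_norm hF_int hF_sum
  simp_rw [hF_integral, hF_tsum, integral_complex_ofReal] at h
  have hpos : 0 < √(4 * π * a) := by positivity
  simpa [mul_div_cancel_left₀ _ hpos.ne'] using
    (Complex.hasSum_ofReal.mp h).div_const (√(4 * π * a))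

lemma one_sub_abs_div_le_tsum_pow_natAbs_mul_exp :
    (1 - |r|) / (1 + |r|) ≤ ∑' j : ℤ, r ^ j.natAbs * rexp (-a * j ^ 2) := by
  have hg := integrable_exp_neg_mul_sq (b := (4 * a)⁻¹) (by positivity)
  have hP_bound (x : ℝ) : ‖poissonKernel 0 r (cexp (x * I))‖ ≤ (1 + |r|) / (1 - |r|) := by
    have h₀ : 0 ≤ (1 - |r|) / (1 + |r|) := div_nonneg (by linarith) (by positivity)
    rw [Real.norm_of_nonneg (h₀.trans (one_sub_abs_div_le_poissonKernel hr x))]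
    exact poissonKernel_le_one_add_abs_div hr x
  have hPg : Integrable fun x : ℝ ↦
      poissonKernel 0 r (cexp (x * I)) * rexp (-(4 * a)⁻¹ * x ^ 2) :=
    hg.bdd_mul (continuous_poissonKernel_cexp_mul_I hr).aestronglyMeasurable
      (.of_forall hP_bound)
  rw [(hasSum_pow_natAbs_mul_exp_neg_mul_sq ha hr).tsum_eq, le_div_iff₀ (by positivity)]
  calc (1 - |r|) / (1 + |r|) * √(4 * π * a)
      = ∫ x : ℝ, (1 - |r|) / (1 + |r|) * rexp (-(4 * a)⁻¹ * x ^ 2) := by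
        rw [integral_const_mul, integral_gaussian, div_inv_eq_mul]; ring_nf
    _ ≤ _ := integral_mono (hg.const_mul _) hPg fun x ↦
        mul_le_mul_of_nonneg_right (one_sub_abs_div_le_poissonKernel hr x) (exp_pos _).le

lemma inv_one_add_abs_le_tsum_pow_mul_exp :
    (1 + |r|)⁻¹ ≤ ∑' n : ℕ, r ^ n * rexp (-a * n ^ 2) := by
  set f : ℤ → ℝ := fun j ↦ r ^ j.natAbs * rexp (-a * j ^ 2)
  have hf : Summable f := (hasSum_pow_natAbs_mul_exp_neg_mul_sq ha hr).summable
  have hf_even : f.Even := fun j ↦ by simp [f]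
  have hf₀ : f 0 = 1 := by simp [f]
  have h := one_sub_abs_div_le_tsum_pow_natAbs_mul_exp ha hr
  rw [tsum_int_eq_zero_add_two_mul_tsum_pnat hf_even hf, hf₀, nsmul_eq_mul, Nat.cast_ofNat] at h
  have hf_nat : Summable fun n : ℕ ↦ f n := hf.comp_injective Nat.cast_injective
  have h' := tsum_zero_pnat_eq_tsum_nat hf_nat
  rw [Nat.cast_zero, hf₀] at h'
  rw [tsum_congr fun n : ℕ ↦ (by simp [f] : r ^ n * rexp (-a * n ^ 2) = f n), ← h']
  have hr' : (1 + |r|)⁻¹ = ((1 - |r|) / (1 + |r|) + 1) / 2 := by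
    field_simp
    ring
  linarith

end GaussianAverage

lemma add_one_mul_add_one_add_one_div_two (n : ℕ) :
    (n + 1) * (n + 1 + 1) / 2 = n * (n + 1) / 2 + (n + 1) := by
  rw [show (n + 1) * (n + 1 + 1) = n * (n + 1) + (n + 1) * 2 by ring,
    Nat.add_mul_div_right _ _ two_pos]

lemma summable_theta {q : ℝ} (hq : |q| < 1) (x : ℝ) :
    Summable fun j : ℕ ↦ q ^ (j * (j + 1) / 2) * x ^ j := by
  refine summable_of_ratio_norm_eventually_le (r := 1 / 2) (by norm_num) ?_
  have h : Filter.Tendsto (fun n : ℕ ↦ ‖q ^ (n + 1) * x‖) Filter.atTop (nhds 0) := by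
    simpa using (((tendsto_pow_atTop_nhds_zero_of_abs_lt_one hq).comp
      (Filter.tendsto_add_atTop_nat 1)).mul_const x).norm
  filter_upwards [h.eventually_le_const (by norm_num : (0 : ℝ) < 1 / 2)] with n hn
  rw [add_one_mul_add_one_add_one_div_two, pow_add, pow_succ x,
    show ∀ a b c : ℝ, a * b * (c * x) = a * c * (b * x) from fun _ _ _ ↦ by ring,
    norm_mul, mul_comm]
  exact mul_le_mul_of_nonneg_right hn (norm_nonneg _)

lemma one_le_theta {q x : ℝ} (hq₀ : 0 ≤ q) (hq₁ : q < 1) (hx : 0 ≤ x) : 1 ≤ theta q x := by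
  simpa [theta] using (summable_theta (abs_lt.2 ⟨by linarith, hq₁⟩) x).le_tsum 0
    fun j _ ↦ by positivity

lemma theta_term_eq {q : ℝ} (hq : 0 < q) (x : ℝ) (n : ℕ) :
    q ^ (n * (n + 1) / 2) * x ^ n = (√q * x) ^ n * rexp (-Real.log (√q)⁻¹ * n ^ 2) := by
  have hexp : rexp (-Real.log (√q)⁻¹ * n ^ 2) = √q ^ (n ^ 2) := by
    rw [Real.log_inv, neg_neg, mul_comm, ← Nat.cast_pow, Real.exp_nat_mul,
      Real.exp_log (Real.sqrt_pos.2 hq)]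
  rw [hexp, mul_pow, mul_right_comm, ← pow_add, ← sq_sqrt hq.le, Real.sqrt_sq (sqrt_nonneg q),
    ← pow_mul, Nat.mul_div_cancel' (Nat.even_mul_succ_self n).two_dvd]
  ring_nf

lemma theta_eq_tsum_gaussian {q : ℝ} (hq : 0 < q) (x : ℝ) :
    theta q x = ∑' n : ℕ, (√q * x) ^ n * rexp (-Real.log (√q)⁻¹ * n ^ 2) :=
  tsum_congr (theta_term_eq hq x)

theorem stmt_11 (q : ℝ) (hq₁ : 0 < q) (hq₂ : q < 1) (x : ℝ)
    (hx : -(q ^ (-(1 / 2) : ℝ)) < x) :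
    1 / 2 < theta q x := by
  rcases le_or_gt 0 x with hx₀ | hx₀
  · linarith [one_le_theta hq₁.le hq₂ hx₀]
  have hsqrt : 0 < √q := Real.sqrt_pos.2 hq₁
  have hr : |√q * x| < 1 := by
    rw [Real.rpow_neg hq₁.le, ← Real.sqrt_eq_rpow, neg_lt, ← mul_lt_mul_iff_right₀ hsqrt,
      mul_inv_cancel₀ hsqrt.ne'] at hx
    rwa [abs_of_neg (mul_neg_of_pos_of_neg hsqrt hx₀), ← mul_neg]
  have ha : 0 < Real.log (√q)⁻¹ :=
    Real.log_pos (one_lt_inv₀ hsqrt |>.2 ((Real.sqrt_lt' one_pos).2 (by rwa [one_pow])))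
  rw [theta_eq_tsum_gaussian hq₁]
  calc 1 / 2 < (1 + |√q * x|)⁻¹ := by
        rw [one_div]; exact inv_strictAnti₀ (by positivity) (by linarith)
    _ ≤ _ := inv_one_add_abs_le_tsum_pow_mul_exp ha hr
end
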